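/- arXiv:1002.2756 — 4 statements merged into one kernel-verified Lean document; each statement's English description precedes it below -/
import Mathlib

section
/- For every positive integer n and 1 < k ≤ m, q*_{k,m}(n) = Σ_{d^m·δ = n} μ_{k,m}(δ), where the sum is over all pairs (d, δ) of positive integers with d^m·δ = n. -/
/-- Local factor: value of μ_{k,m} at a prime power p^α. -/
def muLocal (k m α : ℕ) : ℤ :=
  if α < k then 1 else if α = m then -1 else 0

/-- The generalized Möbius function μ_{k,m}. -/
def mukm (k m n : ℕ) : ℤ :=
  if n = 0 then 0 else ∏ p ∈ n.primeFactors, muLocal k m (n.factorization p)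

/-- Characteristic function of Q*_{k,m}: every prime exponent α satisfies α mod m ∈ {1,…,k-1}. -/
def qstar (k m n : ℕ) : ℤ :=
  if n ≠ 0 ∧ ∀ p ∈ n.primeFactors,
      0 < n.factorization p % m ∧ n.factorization p % m < k then 1 else 0

/-!
All three functions involved are multiplicative with a local factor depending only on the
exponent, and the right-hand side is the Dirichlet convolution of `μ_{k,m}` with the indicator of
`m`-th powers. At `p ^ α` that convolution is `S α = ∑_{i ≤ α, m ∣ i} μ_{k,m}(p ^ (α - i))`, so
`S (α + m) = S α + μ_{k,m}(p ^ (α + m))`. Since `k ≤ m`, the last term is `-1` for `α = 0` and `0`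
otherwise, while `S α = [α < k]` for `α < m`; hence `S α = [0 < α % m < k]` for `α > 0`, which is
the local factor of `q*_{k,m}`.
-/

open ArithmeticFunction Finset

section ofExponent

variable {R : Type*} [CommMonoidWithZero R]

def ofExponent (g : ℕ → R) : ArithmeticFunction R :=
  ⟨fun n => if n = 0 then 0 else ∏ p ∈ n.primeFactors, g (n.factorization p), if_pos rfl⟩

theorem ofExponent_apply {g : ℕ → R} {n : ℕ} (hn : n ≠ 0) :
    ofExponent g n = n.factorization.prod fun _ α => g α := by
  simp [ofExponent, hn, Finsupp.prod]

theorem isMultiplicative_ofExponent (g : ℕ → R) : (ofExponent g).IsMultiplicative := by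
  refine IsMultiplicative.iff_ne_zero.2 ⟨by simp [ofExponent], fun {a b} ha hb hab => ?_⟩
  rw [ofExponent_apply (mul_ne_zero ha hb), ofExponent_apply ha, ofExponent_apply hb,
    Nat.factorization_mul ha hb, Finsupp.prod_add_index_of_disjoint]
  simpa using hab.disjoint_primeFactors

theorem ofExponent_apply_prime_pow {g : ℕ → R} {p α : ℕ} (hp : p.Prime) (hα : α ≠ 0) :
    ofExponent g (p ^ α) = g α := by
  simp [ofExponent, hp.ne_zero, Nat.primeFactors_prime_pow hα hp, hp.factorization_pow]

theorem ofExponent_apply_prime_pow' {g : ℕ → R} (hg : g 0 = 1) {p : ℕ} (hp : p.Prime) (α : ℕ) :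
    ofExponent g (p ^ α) = g α := by
  rcases eq_or_ne α 0 with rfl | hα
  · simp [ofExponent, hg]
  · exact ofExponent_apply_prime_pow hp hα

theorem ofExponent_boole (P : ℕ → Prop) [DecidablePred P] (n : ℕ) :
    ofExponent (fun α => if P α then (1 : R) else 0) n =
      if n ≠ 0 ∧ ∀ p ∈ n.primeFactors, P (n.factorization p) then 1 else 0 := by
  rcases eq_or_ne n 0 with rfl | hn
  · simp [ofExponent]
  · rw [ofExponent, coe_mk, if_neg hn, prod_boole]
    simp only [ne_eq, hn, not_false_eq_true, true_and]

end ofExponent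

theorem mul_apply_prime_pow {R : Type*} [Semiring R] (f g : ArithmeticFunction R) {p : ℕ}
    (hp : p.Prime) (α : ℕ) :
    (f * g) (p ^ α) = ∑ i ∈ range (α + 1), f (p ^ i) * g (p ^ (α - i)) := by
  rw [mul_apply, Nat.sum_divisorsAntidiagonal (fun a b => f a * g b),
    Nat.sum_divisors_prime_pow hp]
  refine sum_congr rfl fun i hi => ?_
  rw [Nat.pow_div (Nat.lt_succ_iff.1 (mem_range.1 hi)) hp.pos]

theorem Nat.exists_pow_eq_iff_dvd_factorization {m a : ℕ} (ha : a ≠ 0) :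
    (∃ d, d ^ m = a) ↔ ∀ p ∈ a.primeFactors, m ∣ a.factorization p := by
  refine ⟨?_, fun h => ⟨∏ p ∈ a.primeFactors, p ^ (a.factorization p / m), ?_⟩⟩
  · rintro ⟨d, rfl⟩ p -
    simp [Nat.factorization_pow]
  · rw [← prod_pow]
    conv_rhs => rw [← Nat.prod_factorization_pow_eq_self ha]
    refine prod_congr (Nat.support_factorization a).symm fun p hp => ?_
    rw [← pow_mul, Nat.div_mul_cancel (h p hp)]

def powIndicator (R : Type*) [CommMonoidWithZero R] (m : ℕ) : ArithmeticFunction R :=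
  ofExponent fun α => if m ∣ α then 1 else 0

theorem powIndicator_apply {R : Type*} [CommMonoidWithZero R] {m n : ℕ} (hn : n ≠ 0) :
    powIndicator R m n = if ∃ d, d ^ m = n then 1 else 0 := by
  simp only [powIndicator, ofExponent_boole, ne_eq, hn, not_false_eq_true, true_and,
    Nat.exists_pow_eq_iff_dvd_factorization hn]

theorem sum_pow_mul_eq_powIndicator_mul_apply {R : Type*} [CommSemiring R]
    (f : ArithmeticFunction R) {m : ℕ} (hm : m ≠ 0) (n : ℕ) :
    ∑ x ∈ (n.divisors ×ˢ n.divisors).filter (fun x => x.1 ^ m * x.2 = n), f x.2 =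
      (powIndicator R m * f) n := by
  rcases eq_or_ne n 0 with rfl | hn
  · simp
  have hpow : ∀ x ∈ n.divisorsAntidiagonal, powIndicator R m x.1 * f x.2 =
      if ∃ d, d ^ m = x.1 then f x.2 else 0 := fun x hx => by
    rw [powIndicator_apply (Nat.left_ne_zero_of_mem_divisorsAntidiagonal hx), boole_mul]
  rw [mul_apply, sum_congr rfl hpow, ← sum_filter]
  refine sum_bij (fun x _ => (x.1 ^ m, x.2)) ?_ ?_ ?_ fun _ _ => rfl
  · simp +contextual
  · intro x _ y _ hxy
    simp only [Prod.mk.injEq] at hxy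
    exact Prod.ext (Nat.pow_left_injective hm hxy.1) hxy.2
  · simp only [mem_filter, Nat.mem_divisorsAntidiagonal]
    rintro ⟨a, δ⟩ ⟨⟨rfl, hn⟩, d, rfl⟩
    refine ⟨(d, δ), ?_, rfl⟩
    simp_all [(dvd_pow_self d hm).trans (dvd_mul_right _ δ)]

section Multiples

variable {M : Type*} [AddCommMonoid M] {m : ℕ}

theorem sum_range_ite_dvd_of_le (g : ℕ → M) {n : ℕ} (hn : 0 < n) (hnm : n ≤ m) :
    ∑ i ∈ range n, (if m ∣ i then g i else 0) = g 0 := by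
  rw [sum_eq_single_of_mem 0 (mem_range.2 hn) fun i hi hi0 => if_neg fun hdvd => hi0 <|
    Nat.eq_zero_of_dvd_of_lt hdvd (by simp at hi; omega)]
  simp

theorem sum_range_ite_dvd_of_lt (g : ℕ → M) {α : ℕ} (hα : α < m) :
    ∑ i ∈ range (α + 1), (if m ∣ i then g (α - i) else 0) = g α :=
  sum_range_ite_dvd_of_le _ α.succ_pos hα

theorem sum_range_ite_dvd_add_self (g : ℕ → M) (hm : m ≠ 0) (α : ℕ) :
    ∑ i ∈ range (α + m + 1), (if m ∣ i then g (α + m - i) else 0) =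
      g (α + m) + ∑ i ∈ range (α + 1), (if m ∣ i then g (α - i) else 0) := by
  rw [show α + m + 1 = m + (α + 1) by omega, sum_range_add]
  congr 1
  · simpa using sum_range_ite_dvd_of_le (fun i => g (α + m - i)) (Nat.pos_of_ne_zero hm) le_rfl
  · refine sum_congr rfl fun i _ => ?_
    simp only [Nat.dvd_add_right (dvd_refl m), show α + m - (m + i) = α - i by omega]

end Multiples

section Local

variable {k m : ℕ}

/-- The local factor of `qstar k m`. Its value at `α = 0` is irrelevant, since `ofExponent` only
reads positive exponents. -/
def qLocal (k m α : ℕ) : ℤ :=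
  if 0 < α % m ∧ α % m < k then 1 else 0

theorem coe_ofExponent_qLocal : ⇑(ofExponent (qLocal k m)) = qstar k m :=
  funext (ofExponent_boole _)

theorem coe_ofExponent_muLocal : ⇑(ofExponent (muLocal k m)) = mukm k m := rfl

theorem muLocal_zero (hk : 0 < k) : muLocal k m 0 = 1 := if_pos hk

theorem sum_range_ite_dvd_muLocal (hk : 0 < k) (hkm : k ≤ m) {α : ℕ} (hα : α ≠ 0) :
    ∑ i ∈ range (α + 1), (if m ∣ i then muLocal k m (α - i) else 0) = qLocal k m α := by
  induction α using Nat.strong_induction_on with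
  | _ α ih =>
    rcases lt_or_ge α m with hαm | hαm
    · rw [sum_range_ite_dvd_of_lt _ hαm]
      simp [muLocal, qLocal, Nat.mod_eq_of_lt hαm, hαm.ne, Nat.pos_of_ne_zero hα]
    obtain ⟨β, rfl⟩ := Nat.exists_eq_add_of_le' hαm
    rw [sum_range_ite_dvd_add_self _ (by omega)]
    rcases eq_or_ne β 0 with rfl | hβ
    · rw [sum_range_ite_dvd_of_lt _ (by omega)]
      simp [muLocal, qLocal, hk, hkm.not_gt]
    · rw [ih β (by omega) hβ]
      simp [muLocal, qLocal, show ¬ β + m < k by omega, hβ]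

theorem ofExponent_qLocal_eq_powIndicator_mul (hk : 0 < k) (hkm : k ≤ m) :
    ofExponent (qLocal k m) = powIndicator ℤ m * ofExponent (muLocal k m) := by
  have hQ := isMultiplicative_ofExponent (qLocal k m)
  have hPM : (powIndicator ℤ m * ofExponent (muLocal k m)).IsMultiplicative :=
    (isMultiplicative_ofExponent _).mul (isMultiplicative_ofExponent _)
  refine (hQ.eq_iff_eq_on_prime_powers _ _ hPM).2 fun p α hp => ?_
  rcases eq_or_ne α 0 with rfl | hα
  · rw [pow_zero, hQ.map_one, hPM.map_one]
  rw [ofExponent_apply_prime_pow hp hα, mul_apply_prime_pow _ _ hp,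
    ← sum_range_ite_dvd_muLocal hk hkm hα]
  refine sum_congr rfl fun i _ => ?_
  rw [powIndicator, ofExponent_apply_prime_pow' (by simp) hp,
    ofExponent_apply_prime_pow' (muLocal_zero hk) hp, boole_mul]

end Local

theorem qstar_eq_sum_mukm_general (k m n : ℕ) (hk : 1 < k) (hkm : k ≤ m) :
    qstar k m n =
      ∑ x ∈ (n.divisors ×ˢ n.divisors).filter (fun x => x.1 ^ m * x.2 = n),
        mukm k m x.2 := by
  rw [← coe_ofExponent_muLocal, sum_pow_mul_eq_powIndicator_mul_apply _ (by omega),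
    ← ofExponent_qLocal_eq_powIndicator_mul (by omega) hkm, coe_ofExponent_qLocal]

theorem qstar_eq_sum_mukm (k m n : ℕ) (hk : 1 < k) (hkm : k ≤ m) (hn : 0 < n) :
    qstar k m n =
      ∑ x ∈ (n.divisors ×ˢ n.divisors).filter (fun x => x.1 ^ m * x.2 = n),
        mukm k m x.2 :=
  qstar_eq_sum_mukm_general k m n hk hkm
end

section
/- For every positive integer n and 1 < k ≤ m, μ_{k,m}(n) = Σ_{d^m·δ = n} μ(d)·q*_{k,m}(δ), where μ is the ordinary Möbius function and the sum is over all pairs (d, δ) with d^m·δ = n. -/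
open ArithmeticFunction Finset

/-- Generic arithmetic function given by a product of local factors. -/
def Floc (f : ℕ → ℤ) : ArithmeticFunction ℤ :=
  ⟨fun n => if n = 0 then 0 else ∏ p ∈ n.primeFactors, f (n.factorization p), by simp⟩

lemma Floc_apply (f : ℕ → ℤ) {n : ℕ} (hn : n ≠ 0) :
    Floc f n = ∏ p ∈ n.primeFactors, f (n.factorization p) := by
  simp [Floc, hn]

lemma Floc_one (f : ℕ → ℤ) : Floc f 1 = 1 := by simp [Floc]

lemma Floc_isMult (f : ℕ → ℤ) : (Floc f).IsMultiplicative := by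
  refine ⟨Floc_one f, ?_⟩
  intro a b hab
  rcases eq_or_ne a 0 with rfl | ha
  · have hb : b = 1 := by simpa using hab
    subst hb; simp [Floc]
  rcases eq_or_ne b 0 with rfl | hb
  · have ha' : a = 1 := by simpa using hab
    subst ha'; simp [Floc]
  have hmul : a * b ≠ 0 := mul_ne_zero ha hb
  rw [Floc_apply f hmul, Floc_apply f ha, Floc_apply f hb,
    Nat.primeFactors_mul ha hb, Finset.prod_union hab.disjoint_primeFactors]
  congr 1
  · refine Finset.prod_congr rfl fun p hp => ?_
    have hpb : b.factorization p = 0 := by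
      rw [← Finsupp.notMem_support_iff, Nat.support_factorization]
      exact Finset.disjoint_left.mp hab.disjoint_primeFactors hp
    rw [Nat.factorization_mul ha hb]
    simp [hpb]
  · refine Finset.prod_congr rfl fun p hp => ?_
    have hpa : a.factorization p = 0 := by
      rw [← Finsupp.notMem_support_iff, Nat.support_factorization]
      exact Finset.disjoint_right.mp hab.disjoint_primeFactors hp
    rw [Nat.factorization_mul ha hb]
    simp [hpa]

lemma Floc_prime_pow (f : ℕ → ℤ) (h0 : f 0 = 1) {p : ℕ} (hp : p.Prime) (i : ℕ) :
    Floc f (p ^ i) = f i := by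
  rcases Nat.eq_zero_or_pos i with rfl | hi
  · simpa [Floc_one] using h0.symm
  · rw [Floc_apply f (pow_ne_zero i hp.pos.ne')]
    rw [Nat.primeFactors_prime_pow hi.ne' hp]
    rw [Finset.prod_singleton, hp.factorization_pow, Finsupp.single_eq_same]

/-- local factor for the "Möbius at m-th root" function -/
def Aloc (m α : ℕ) : ℤ := if α = 0 then 1 else if α = m then -1 else 0

/-- local factor for the Möbius function -/
def Mloc (α : ℕ) : ℤ := if α = 0 then 1 else if α = 1 then -1 else 0

/-- local factor for qstar -/
def Qloc (k m α : ℕ) : ℤ := if α = 0 then 1 else if 0 < α % m ∧ α % m < k then 1 else 0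

lemma moebius_eq_Floc {n : ℕ} (hn : n ≠ 0) : (moebius n : ℤ) = Floc Mloc n := by
  rw [IsMultiplicative.multiplicative_factorization _ isMultiplicative_moebius hn,
    Floc_apply _ hn, Finsupp.prod, Nat.support_factorization]
  refine Finset.prod_congr rfl fun p hp => ?_
  have hp' : p.Prime := Nat.prime_of_mem_primeFactors hp
  have hpos : n.factorization p ≠ 0 := by
    rw [← Finsupp.mem_support_iff, Nat.support_factorization]; exact hp
  rw [moebius_apply_prime_pow hp' hpos]
  simp [Mloc, hpos]

lemma qstar_eq_Floc (k m : ℕ) {n : ℕ} (hn : n ≠ 0) : qstar k m n = Floc (Qloc k m) n := by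
  rw [Floc_apply _ hn, qstar]
  by_cases h : ∀ p ∈ n.primeFactors, 0 < n.factorization p % m ∧ n.factorization p % m < k
  · rw [if_pos ⟨hn, h⟩, eq_comm]
    refine Finset.prod_eq_one fun p hp => ?_
    obtain ⟨h1, h2⟩ := h p hp
    have hα : n.factorization p ≠ 0 := by
      intro h0; rw [h0] at h1; simp at h1
    rw [Qloc, if_neg hα, if_pos ⟨h1, h2⟩]
  · rw [if_neg (by tauto), eq_comm]
    push_neg at h
    obtain ⟨p, hp, hcond⟩ := h
    refine Finset.prod_eq_zero hp ?_
    have hα : n.factorization p ≠ 0 := by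
      rw [← Finsupp.mem_support_iff, Nat.support_factorization]; exact hp
    rw [Qloc, if_neg hα, if_neg]
    intro hc
    exact absurd (hc.2) (by have := hcond hc.1; omega)

lemma sum_Aloc_Qloc (k m i : ℕ) (hk : 1 < k) (hkm : k ≤ m) :
    ∑ j ∈ Finset.range (i + 1), Aloc m j * Qloc k m (i - j) = muLocal k m i := by
  have hm : m ≠ 0 := by omega
  have step : ∀ j ∈ Finset.range (i + 1), Aloc m j * Qloc k m (i - j) =
      (if j = 0 then Qloc k m i else 0) + (if j = m then -Qloc k m (i - m) else 0) := by
    intro j _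
    by_cases hj0 : j = 0
    · subst hj0
      rw [if_pos rfl, if_neg (show (0:ℕ) ≠ m by omega), Nat.sub_zero, add_zero,
        Aloc, if_pos rfl, one_mul]
    by_cases hjm : j = m
    · subst hjm
      simp [Aloc, hj0]
    · simp [Aloc, hj0, hjm]
  rw [Finset.sum_congr rfl step, Finset.sum_add_distrib,
    Finset.sum_ite_eq' (Finset.range (i + 1)) 0 (fun _ => Qloc k m i),
    Finset.sum_ite_eq' (Finset.range (i + 1)) m (fun _ => -Qloc k m (i - m))]
  simp only [Finset.mem_range, Nat.lt_succ_iff, Nat.zero_le, if_true]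
  rcases lt_trichotomy i m with him | rfl | hmi
  · rw [if_neg (by omega)]
    have hmod : i % m = i := Nat.mod_eq_of_lt him
    simp only [Qloc, muLocal, hmod, add_zero]
    split_ifs <;> omega
  · simp only [Qloc, muLocal, Nat.sub_self, Nat.mod_self, le_refl, if_true]
    split_ifs <;> omega
  · rw [if_pos (by omega)]
    have hmod : i % m = (i - m) % m := Nat.mod_eq_sub_mod hmi.le
    have h1 : i ≠ 0 := by omega
    have h2 : i - m ≠ 0 := by omega
    simp only [Qloc, muLocal, hmod, if_neg h1, if_neg h2,
      if_neg (show ¬ i < k by omega), if_neg (show i ≠ m by omega)]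
    split_ifs <;> ring

lemma Floc_Aloc_pow {m : ℕ} (hm : m ≠ 0) {d : ℕ} (hd : d ≠ 0) :
    Floc (Aloc m) (d ^ m) = moebius d := by
  rw [moebius_eq_Floc hd, Floc_apply _ (pow_ne_zero _ hd), Floc_apply _ hd,
    Nat.primeFactors_pow d hm]
  refine Finset.prod_congr rfl fun p hp => ?_
  have hα : d.factorization p ≠ 0 := by
    rw [← Finsupp.mem_support_iff, Nat.support_factorization]; exact hp
  rw [Nat.factorization_pow]
  simp only [Finsupp.smul_apply, smul_eq_mul]
  have hmm0 : m * d.factorization p ≠ 0 := Nat.mul_ne_zero hm hα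
  by_cases h1 : d.factorization p = 1
  · rw [h1, mul_one, Aloc, Mloc, if_neg hm, if_pos rfl, if_neg (by omega), if_pos rfl]
  · have h2 : m * d.factorization p ≠ m := by
      intro h
      exact h1 (Nat.eq_of_mul_eq_mul_left (Nat.pos_of_ne_zero hm) (by simpa using h))
    rw [Aloc, Mloc, if_neg hmm0, if_neg h2, if_neg hα, if_neg h1]

lemma exists_pow_of_Floc_Aloc_ne {m : ℕ} (hm : m ≠ 0) {e : ℕ}
    (he : Floc (Aloc m) e ≠ 0) : ∃ d, d ^ m = e := by
  rcases eq_or_ne e 0 with rfl | he0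
  · exact absurd (by simp [Floc]) he
  refine ⟨∏ p ∈ e.primeFactors, p, ?_⟩
  rw [← Finset.prod_pow]
  conv_rhs => rw [← Nat.factorization_prod_pow_eq_self he0]
  rw [Finsupp.prod, Nat.support_factorization]
  refine Finset.prod_congr rfl fun p hp => ?_
  have hα : e.factorization p ≠ 0 := by
    rw [← Finsupp.mem_support_iff, Nat.support_factorization]; exact hp
  rw [Floc_apply _ he0] at he
  have hAp : Aloc m (e.factorization p) ≠ 0 := by
    intro h
    exact he (Finset.prod_eq_zero hp h)
  have : e.factorization p = m := by
    rw [Aloc, if_neg hα] at hAp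
    by_contra hne
    exact hAp (if_neg hne)
  rw [this]

open ArithmeticFunction in
theorem mukm_eq_sum_moebius_qstar (k m n : ℕ) (hk : 1 < k) (hkm : k ≤ m) (hn : 0 < n) :
    mukm k m n =
      ∑ x ∈ (n.divisors ×ˢ n.divisors).filter (fun x => x.1 ^ m * x.2 = n),
        (moebius x.1) * qstar k m x.2 := by
  classical
  have hm : m ≠ 0 := by omega
  have hn' : n ≠ 0 := hn.ne'
  have hL : mukm k m n = Floc (muLocal k m) n := by
    rw [mukm, if_neg hn', Floc_apply _ hn']
  have hEq : Floc (muLocal k m) = Floc (Aloc m) * Floc (Qloc k m) := by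
    rw [IsMultiplicative.eq_iff_eq_on_prime_powers _ (Floc_isMult _) _
      ((Floc_isMult (Aloc m)).mul (Floc_isMult (Qloc k m)))]
    intro p i hp
    rw [Floc_prime_pow _ (by simp [muLocal]; omega) hp, mul_apply,
      ← Nat.map_div_right_divisors, Finset.sum_map]
    show muLocal k m i = ∑ x ∈ (p ^ i).divisors, Floc (Aloc m) x * Floc (Qloc k m) (p ^ i / x)
    rw [Nat.divisors_prime_pow hp, Finset.sum_map]
    simp only [Function.Embedding.coeFn_mk]
    rw [← sum_Aloc_Qloc k m i hk hkm]
    refine Finset.sum_congr rfl fun j hj => ?_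
    have hji : j ≤ i := by
      rw [Finset.mem_range] at hj; omega
    rw [Nat.pow_div hji hp.pos,
      Floc_prime_pow _ (by simp [Aloc]) hp, Floc_prime_pow _ (by simp [Qloc]) hp]
  rw [hL, hEq, mul_apply]
  rw [← Finset.sum_filter_of_ne
    (p := fun x : ℕ × ℕ => ∃ d, d ^ m = x.1)
    (fun x _ hx => exists_pow_of_Floc_Aloc_ne hm
      (fun h0 => hx (by rw [h0, zero_mul])))]
  refine (Finset.sum_bij (fun (x : ℕ × ℕ) (_ : x ∈ (n.divisors ×ˢ n.divisors).filter
      (fun x => x.1 ^ m * x.2 = n)) => (x.1 ^ m, x.2)) ?_ ?_ ?_ ?_).symm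
  · rintro ⟨d, δ⟩ ha
    simp only [Finset.mem_filter, Finset.mem_product, Nat.mem_divisors] at ha
    obtain ⟨⟨⟨hd, _⟩, ⟨hδ, _⟩⟩, heq⟩ := ha
    simp only [Finset.mem_filter, Nat.mem_divisorsAntidiagonal]
    exact ⟨⟨heq, hn'⟩, ⟨d, rfl⟩⟩
  · rintro ⟨d1, δ1⟩ h1 ⟨d2, δ2⟩ h2 heq
    simp only [Prod.mk.injEq] at heq
    obtain ⟨h, hδ⟩ := heq
    have : d1 = d2 := Nat.pow_left_injective (by omega : m ≠ 0) (by simpa using h)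
    simp [this, hδ]
  · rintro ⟨e, δ⟩ hb
    simp only [Finset.mem_filter, Nat.mem_divisorsAntidiagonal] at hb
    obtain ⟨⟨heq, _⟩, ⟨d, rfl⟩⟩ := hb
    refine ⟨(d, δ), ?_, rfl⟩
    simp only [Finset.mem_filter, Finset.mem_product, Nat.mem_divisors]
    refine ⟨⟨⟨dvd_trans (dvd_pow_self d hm) ⟨δ, heq.symm⟩, hn'⟩, ⟨⟨d ^ m, by rw [← heq]; ring⟩, hn'⟩⟩, heq⟩
  · rintro ⟨d, δ⟩ ha
    simp only [Finset.mem_filter, Finset.mem_product, Nat.mem_divisors] at ha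
    obtain ⟨⟨⟨hd, _⟩, ⟨hδ, _⟩⟩, heq⟩ := ha
    have hd0 : d ≠ 0 := fun h => hn' (by simp [h, hm] at heq; omega)
    have hδ0 : δ ≠ 0 := fun h => hn' (by simp [h] at heq; omega)
    rw [Floc_Aloc_pow hm hd0, qstar_eq_Floc k m hδ0]
end

section
/- For a prime p, real s > 1, and integers 1 < k < m, the generating series of q*_{k,m} at p satisfies Σ_{α≥0} q*_{k,m}(p^α)/p^{αs} = 1 + ((1/p^s - 1/p^{ks})/(1 - 1/p^s)) · (1/(1 - 1/p^{ms})), which equals (1 - 1/p^s)^{-1}(1 - 1/p^{ms})^{-1}(1 - 1/p^{ks} - 1/p^{ms} + 1/p^{(m+1)s}). -/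
open Finset

theorem qstar_prime_pow {p : ℕ} (hp : p.Prime) (k m α : ℕ) :
    qstar k m (p ^ α) = if α = 0 ∨ (0 < α % m ∧ α % m < k) then 1 else 0 := by
  rcases eq_or_ne α 0 with rfl | hα
  · simp [qstar]
  · simp [qstar, hα, hp.ne_zero, Nat.primeFactors_pow p hα, hp.primeFactors,
      hp.factorization_pow]

theorem hasSum_mod_mul_pow {K : Type*} [NormedField K] [CompleteSpace K] {m : ℕ} [NeZero m]
    (c : ℕ → K) {x : K} (hx : ‖x‖ < 1) :
    HasSum (fun n ↦ c (n % m) * x ^ n) ((1 - x ^ m)⁻¹ * ∑ r ∈ range m, c r * x ^ r) := by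
  have hxm : ‖x ^ m‖ < 1 := by
    rw [norm_pow]; exact pow_lt_one₀ (norm_nonneg x) hx (NeZero.ne m)
  have hG : HasSum (fun r : Fin m ↦ c r * x ^ (r : ℕ)) (∑ r ∈ range m, c r * x ^ r) := by
    rw [sum_range (fun r ↦ c r * x ^ r)]; exact hasSum_fintype _
  have hnorm : Summable fun q : ℕ ↦ ‖(x ^ m) ^ q‖ := by
    simpa only [norm_pow] using summable_geometric_of_lt_one (norm_nonneg _) hxm
  have hGn : Summable fun r : Fin m ↦ ‖c r * x ^ (r : ℕ)‖ := Summable.of_finite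
  have hs := summable_mul_of_summable_norm hnorm hGn
  have hprod := (hasSum_geometric_of_norm_lt_one hxm).mul hG hs
  have hfun : (fun n ↦ c (n % m) * x ^ n) ∘ (Nat.divModEquiv m).symm =
      fun qr : ℕ × Fin m ↦ (x ^ m) ^ qr.1 * (c qr.2 * x ^ (qr.2 : ℕ)) := by
    funext ⟨q, r⟩
    simp only [Nat.divModEquiv, Equiv.symm_mk, Equiv.coe_fn_mk, Function.comp_apply,
      Nat.mul_add_mod_self_right, Nat.mod_eq_of_lt r.isLt, pow_add, pow_mul]
    ring
  rw [← (Nat.divModEquiv m).symm.hasSum_iff, hfun]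
  exact hprod

theorem sum_range_ite_mul_pow {K : Type*} [Field K] {x : K} (hx : x ≠ 1) {k m : ℕ}
    (hk : 1 ≤ k) (hkm : k ≤ m) :
    ∑ r ∈ range m, (if 0 < r ∧ r < k then 1 else 0) * x ^ r = (x - x ^ k) / (1 - x) := by
  have hIco : (range m).filter (fun r ↦ 0 < r ∧ r < k) = Ico 1 k := by
    ext r; simp only [mem_filter, mem_range, mem_Ico]; omega
  simp_rw [ite_mul, one_mul, zero_mul]
  rw [← sum_filter, hIco, geom_sum_Ico hx hk, pow_one, ← neg_div_neg_eq, neg_sub, neg_sub]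

theorem hasSum_qstar_prime_pow_mul_pow {K : Type*} [NormedField K] [CompleteSpace K]
    {p : ℕ} (hp : p.Prime) {k m : ℕ} (hk : 1 ≤ k) (hkm : k ≤ m) {x : K} (hx : ‖x‖ < 1) :
    HasSum (fun α ↦ (qstar k m (p ^ α) : K) * x ^ α)
      (1 + (x - x ^ k) / (1 - x) * (1 - x ^ m)⁻¹) := by
  have : NeZero m := ⟨by omega⟩
  have hx1 : x ≠ 1 := by rintro rfl; simp at hx
  set c : ℕ → K := fun r ↦ if 0 < r ∧ r < k then 1 else 0
  have hterm : ∀ α, (qstar k m (p ^ α) : K) * x ^ α =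
      (if α = 0 then 1 else 0) + c (α % m) * x ^ α := by
    intro α
    rcases eq_or_ne α 0 with rfl | hα
    · rw [qstar_prime_pow hp]; simp [c]
    · simp [qstar_prime_pow hp, hα, c]
  have hsum := (hasSum_ite_eq 0 (1 : K)).add (hasSum_mod_mul_pow (m := m) c hx)
  rw [sum_range_ite_mul_pow hx1 hk hkm, mul_comm] at hsum
  simp_rw [hterm]
  exact hsum

theorem euler_factor_qstar (p : ℕ) (hp : p.Prime) (s : ℝ) (hs : 1 < s)
    (k m : ℕ) (hk : 1 < k) (hkm : k < m) :
    (∑' α : ℕ, (qstar k m (p ^ α) : ℝ) / (p : ℝ) ^ ((α : ℝ) * s)) =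
        1 + ((1 / (p : ℝ) ^ s - 1 / (p : ℝ) ^ ((k : ℝ) * s)) / (1 - 1 / (p : ℝ) ^ s)) *
          (1 / (1 - 1 / (p : ℝ) ^ ((m : ℝ) * s))) ∧
    (∑' α : ℕ, (qstar k m (p ^ α) : ℝ) / (p : ℝ) ^ ((α : ℝ) * s)) =
        (1 - 1 / (p : ℝ) ^ s)⁻¹ * (1 - 1 / (p : ℝ) ^ ((m : ℝ) * s))⁻¹ *
          (1 - 1 / (p : ℝ) ^ ((k : ℝ) * s) - 1 / (p : ℝ) ^ ((m : ℝ) * s) +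
            1 / (p : ℝ) ^ (((m : ℝ) + 1) * s)) := by
  set x : ℝ := 1 / (p : ℝ) ^ s
  have hps : 1 < (p : ℝ) ^ s :=
    Real.one_lt_rpow (by exact_mod_cast hp.one_lt) (by linarith)
  have hx0 : 0 < x := by positivity
  have hx1 : x < 1 := (div_lt_one (by linarith)).mpr hps
  have hpow : ∀ n : ℕ, 1 / (p : ℝ) ^ ((n : ℝ) * s) = x ^ n := fun n ↦ by
    rw [mul_comm, Real.rpow_mul_natCast (Nat.cast_nonneg p), one_div_pow]
  have hm1 : 1 / (p : ℝ) ^ (((m : ℝ) + 1) * s) = x ^ (m + 1) := by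
    exact_mod_cast hpow (m + 1)
  have hsum : (∑' α : ℕ, (qstar k m (p ^ α) : ℝ) / (p : ℝ) ^ ((α : ℝ) * s)) =
      1 + (x - x ^ k) / (1 - x) * (1 - x ^ m)⁻¹ := by
    have hx : ‖x‖ < 1 := by rwa [Real.norm_of_nonneg hx0.le]
    have hterm : ∀ α : ℕ, (qstar k m (p ^ α) : ℝ) / (p : ℝ) ^ ((α : ℝ) * s) =
        (qstar k m (p ^ α) : ℝ) * x ^ α := fun α ↦ by rw [div_eq_mul_one_div, hpow]
    simp_rw [hterm]
    exact (hasSum_qstar_prime_pow_mul_pow hp hk.le hkm.le hx).tsum_eq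
  have h1x : 1 - x ≠ 0 := by linarith
  have h1xm : 1 - x ^ m ≠ 0 := by linarith [pow_lt_one₀ hx0.le hx1 (by omega : m ≠ 0)]
  rw [hsum, hpow, hpow, hm1]
  refine ⟨by rw [one_div], ?_⟩
  field_simp
  ring
end

section
/- For every positive integer n and 1 < k ≤ m, the identity Σ_{d^m·δ = n} μ_{k,m}(δ) evaluated at a prime power n = p^{ℓm} (ℓ ≥ 1) equals 0, at n = p^{ℓm+i} with 0 < i < k equals 1, and at n = p^{ℓm+i} with k ≤ i < m equals 0. -/
open Finset

theorem mukm_prime_pow {k m p : ℕ} (hk : 0 < k) (hp : p.Prime) (α : ℕ) :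
    mukm k m (p ^ α) = muLocal k m α := by
  rcases Nat.eq_zero_or_pos α with rfl | hα
  · simp [mukm, muLocal, hk]
  · rw [mukm, if_neg (pow_ne_zero _ hp.ne_zero), Nat.primeFactors_prime_pow hα.ne' hp,
      prod_singleton, hp.factorization_pow, Finsupp.single_eq_same]

def powMulPairs (m n : ℕ) : Finset (ℕ × ℕ) :=
  (n.divisors ×ˢ n.divisors).filter fun x => x.1 ^ m * x.2 = n

theorem mem_powMulPairs {m n : ℕ} (hm : m ≠ 0) {x : ℕ × ℕ} :
    x ∈ powMulPairs m n ↔ x.1 ^ m * x.2 = n ∧ n ≠ 0 := by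
  simp only [powMulPairs, mem_filter, mem_product, Nat.mem_divisors]
  constructor
  · rintro ⟨⟨⟨-, hn⟩, -⟩, h⟩
    exact ⟨h, hn⟩
  · rintro ⟨rfl, hn⟩
    exact ⟨⟨⟨(dvd_pow_self _ hm).mul_right _, hn⟩, dvd_mul_left _ _, hn⟩, rfl⟩

theorem powMulPairs_prime_pow {m p ℓ i : ℕ} (hp : p.Prime) (hi : i < m) :
    powMulPairs m (p ^ (ℓ * m + i)) =
      (range (ℓ + 1)).image fun j => (p ^ (ℓ - j), p ^ (m * j + i)) := by
  have hm : m ≠ 0 := by omega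
  ext ⟨d, δ⟩
  simp only [mem_powMulPairs hm, mem_image, mem_range, Prod.mk.injEq]
  constructor
  · rintro ⟨h, -⟩
    obtain ⟨a, -, rfl⟩ := (Nat.dvd_prime_pow hp).mp ((dvd_pow_self d hm).trans (Dvd.intro δ h))
    obtain ⟨c, -, rfl⟩ := (Nat.dvd_prime_pow hp).mp (Dvd.intro_left _ h)
    have hexp : a * m + c = ℓ * m + i := by
      rw [← pow_mul, ← pow_add] at h
      exact Nat.pow_right_injective hp.two_le h
    have haℓ : a ≤ ℓ := by
      by_contra! h
      nlinarith
    obtain ⟨j, rfl⟩ := Nat.exists_eq_add_of_le haℓ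
    refine ⟨j, by omega, by rw [Nat.add_sub_cancel], congrArg _ ?_⟩
    linarith
  · rintro ⟨j, hj, rfl, rfl⟩
    refine ⟨?_, pow_ne_zero _ hp.ne_zero⟩
    have : j * m ≤ ℓ * m := Nat.mul_le_mul_right m (by omega)
    rw [← pow_mul, ← pow_add, Nat.sub_mul, Nat.mul_comm m j]
    congr 1
    omega

theorem sum_powMulPairs_prime_pow {M : Type*} [AddCommMonoid M] (f : ℕ → M)
    {m p ℓ i : ℕ} (hp : p.Prime) (hi : i < m) :
    ∑ x ∈ powMulPairs m (p ^ (ℓ * m + i)), f x.2 = ∑ j ∈ range (ℓ + 1), f (p ^ (m * j + i)) := by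
  rw [powMulPairs_prime_pow hp hi, sum_image]
  intro j _ j' _ h
  have h' : m * j + i = m * j' + i := Nat.pow_right_injective hp.two_le (congrArg Prod.snd h)
  exact Nat.eq_of_mul_eq_mul_left (by omega) (Nat.add_right_cancel h')

theorem muLocal_mul_add_of_pos {k m i j : ℕ} (hkm : k ≤ m) (hi : i < m) (hj : 0 < j) :
    muLocal k m (m * j + i) = if j = 1 ∧ i = 0 then -1 else 0 := by
  have hmj : m ≤ m * j := Nat.le_mul_of_pos_right m hj
  rw [muLocal, if_neg (by omega)]
  congr 1
  refine propext ⟨fun h => ?_, fun ⟨hj1, hi0⟩ => by simp [hj1, hi0]⟩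
  have : j < 2 := by
    by_contra! h2
    nlinarith
  omega

theorem sum_range_muLocal_mul_add {k m i : ℕ} (hkm : k ≤ m) (hi : i < m) (ℓ : ℕ) :
    ∑ j ∈ range (ℓ + 1), muLocal k m (m * j + i) =
      muLocal k m i + if 0 < ℓ ∧ i = 0 then -1 else 0 := by
  rw [sum_range_succ', add_comm, Nat.mul_zero, Nat.zero_add]
  congr 1
  rw [sum_congr rfl fun j _ => muLocal_mul_add_of_pos hkm hi j.succ_pos]
  simp [Nat.add_eq_right, ite_and]

theorem sum_powMulPairs_mukm_prime_pow {k m p ℓ i : ℕ} (hk : 0 < k) (hkm : k ≤ m)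
    (hp : p.Prime) (hi : i < m) :
    ∑ x ∈ powMulPairs m (p ^ (ℓ * m + i)), mukm k m x.2 =
      muLocal k m i + if 0 < ℓ ∧ i = 0 then -1 else 0 := by
  simp_rw [sum_powMulPairs_prime_pow _ hp hi, mukm_prime_pow hk hp]
  exact sum_range_muLocal_mul_add hkm hi ℓ

theorem sum_mukm_prime_pow (k m : ℕ) (hk : 1 < k) (hkm : k ≤ m)
    (p : ℕ) (hp : p.Prime) :
    (∀ ℓ : ℕ, 1 ≤ ℓ →
      ∑ x ∈ ((p ^ (ℓ * m)).divisors ×ˢ (p ^ (ℓ * m)).divisors).filter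
          (fun x => x.1 ^ m * x.2 = p ^ (ℓ * m)), mukm k m x.2 = 0) ∧
    (∀ ℓ i : ℕ, 0 < i → i < k →
      ∑ x ∈ ((p ^ (ℓ * m + i)).divisors ×ˢ (p ^ (ℓ * m + i)).divisors).filter
          (fun x => x.1 ^ m * x.2 = p ^ (ℓ * m + i)), mukm k m x.2 = 1) ∧
    (∀ ℓ i : ℕ, k ≤ i → i < m →
      ∑ x ∈ ((p ^ (ℓ * m + i)).divisors ×ˢ (p ^ (ℓ * m + i)).divisors).filter
          (fun x => x.1 ^ m * x.2 = p ^ (ℓ * m + i)), mukm k m x.2 = 0) := by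
  have hk0 : 0 < k := by omega
  refine ⟨fun ℓ hℓ => ?_, fun ℓ i hi hik => ?_, fun ℓ i hki him => ?_⟩
  · refine (sum_powMulPairs_mukm_prime_pow (i := 0) hk0 hkm hp (by omega)).trans ?_
    simp [muLocal, hk0, show 0 < ℓ from hℓ]
  · refine (sum_powMulPairs_mukm_prime_pow hk0 hkm hp (by omega)).trans ?_
    simp [muLocal, hik, hi.ne']
  · refine (sum_powMulPairs_mukm_prime_pow hk0 hkm hp him).trans ?_
    simp [muLocal, not_lt.mpr hki, him.ne, (hk0.trans_le hki).ne']
end
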